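/- For every real number t with 0 ≤ t < 1, one has ∑_{n=1}^∞ n^{n} · (t·e^{-t})^n / n! = t / (1-t). -/

import Mathlib

/-!
Put `c n = n ^ n / n!` (so `c 0 = 1`). Expanding `exp (-n t)` turns `∑ c n (t e^{-t}) ^ n` into
a double series whose `m`-th antidiagonal sum is `t ^ m / m! * ∑ₖ (-1) ^ (m - k) C(m, k) k ^ m`;
the inner sum is the `m`-th forward difference of `x ^ m`, namely `m!`, so the antidiagonal sum
is `t ^ m`. For small `t > 0` the double series converges absolutely, hence
`∑ c n (t e^{-t}) ^ n = ∑ t ^ m = (1 - t)⁻¹`. Since `n ^ n / n! ≤ e ^ n`, the power series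
`∑ c n x ^ n` has radius at least `e⁻¹`, and `t e^{-t} < e⁻¹` for `t ≠ 1`; so both sides are
analytic on `[0, 1)` and the identity theorem extends the equality to all of `[0, 1)`. Removing
the term `c 0 = 1` gives `t / (1 - t)`.
-/

open Finset Real Topology FormalMultilinearSeries
open scoped Nat

theorem HasSum.sum_antidiagonal {A α : Type*} [AddCommMonoid A] [HasAntidiagonal A]
    [AddCommMonoid α] [TopologicalSpace α] [ContinuousAdd α] [RegularSpace α]
    {f : A × A → α} {a : α} (hf : HasSum f a) : HasSum (fun n ↦ ∑ kl ∈ antidiagonal n, f kl) a :=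
  (HasAntidiagonal.sigmaAntidiagonalEquivProd.hasSum_iff.2 hf).sigma fun n ↦
    (antidiagonal n).hasSum f

theorem sum_antidiagonal_neg_one_pow_mul_choose_mul_pow_self {R : Type*} [CommRing R] (m : ℕ) :
    ∑ kl ∈ antidiagonal m, (-1 : R) ^ kl.2 * m.choose kl.1 * (kl.1 : R) ^ m = m ! := by
  have h := congrFun (fwdDiff_iter_eq_factorial (R := R) (n := m)) 0
  rw [fwdDiff_iter_eq_sum_shift] at h
  rw [Nat.sum_antidiagonal_eq_sum_range_succ (fun k j ↦ (-1 : R) ^ j * m.choose k * (k : R) ^ m)]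
  simpa [zsmul_eq_mul] using h

theorem abs_mul_exp_neg_lt_exp_neg_one {t : ℝ} (ht0 : 0 ≤ t) (ht1 : t ≠ 1) :
    |t * exp (-t)| < exp (-1) := by
  have h : t < exp (t - 1) := by linarith [add_one_lt_exp (sub_ne_zero.2 ht1)]
  rw [abs_of_nonneg (by positivity)]
  calc t * exp (-t) < exp (t - 1) * exp (-t) := mul_lt_mul_of_pos_right h (exp_pos _)
    _ = exp (-1) := by rw [← exp_add]; ring_nf

noncomputable def selfPowSeries : FormalMultilinearSeries ℝ ℝ ℝ :=
  ofScalars ℝ fun n ↦ (n : ℝ) ^ n / n !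

theorem exp_neg_one_le_radius_selfPowSeries : ENNReal.ofReal (exp (-1)) ≤ selfPowSeries.radius := by
  refine le_radius_of_bound _ 1 fun n ↦ ?_
  rw [selfPowSeries, ofScalars_norm, Real.coe_toNNReal _ (exp_pos _).le,
    norm_of_nonneg (by positivity)]
  calc (n : ℝ) ^ n / n ! * exp (-1) ^ n ≤ exp n * exp (-1) ^ n := by
        gcongr; exact pow_div_factorial_le_exp _ n.cast_nonneg n
    _ = 1 := by rw [← exp_nat_mul, ← exp_add]; simp

theorem mem_eball_radius_selfPowSeries {x : ℝ} (hx : |x| < exp (-1)) :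
    x ∈ Metric.eball 0 selfPowSeries.radius := by
  refine lt_of_lt_of_le ?_ exp_neg_one_le_radius_selfPowSeries
  rwa [edist_dist, ENNReal.ofReal_lt_ofReal_iff (exp_pos _), Real.dist_0_eq_abs]

theorem hasSum_selfPowSeries {x : ℝ} (hx : |x| < exp (-1)) :
    HasSum (fun n : ℕ ↦ (n : ℝ) ^ n / n ! * x ^ n) (selfPowSeries.sum x) := by
  simpa [selfPowSeries, ofScalars_apply_eq, mul_comm] using
    selfPowSeries.hasSum (mem_eball_radius_selfPowSeries hx)

theorem analyticAt_selfPowSeries_sum {x : ℝ} (hx : |x| < exp (-1)) :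
    AnalyticAt ℝ selfPowSeries.sum x :=
  (selfPowSeries.hasFPowerSeriesOnBall ((ENNReal.ofReal_pos.2 (exp_pos _)).trans_le
    exp_neg_one_le_radius_selfPowSeries)).analyticAt_of_mem (mem_eball_radius_selfPowSeries hx)

noncomputable def selfPowExpTerm (t : ℝ) (p : ℕ × ℕ) : ℝ :=
  (p.1 : ℝ) ^ p.1 / p.1 ! * t ^ p.1 * ((p.1 * -t) ^ p.2 / p.2 !)

theorem hasSum_selfPowExpTerm_fiber (t : ℝ) (n : ℕ) :
    HasSum (fun j ↦ selfPowExpTerm t (n, j)) ((n : ℝ) ^ n / n ! * (t * exp (-t)) ^ n) := by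
  have h := (NormedSpace.expSeries_div_hasSum_exp (n * -t)).mul_left ((n : ℝ) ^ n / n ! * t ^ n)
  rw [← exp_eq_exp_ℝ, exp_nat_mul] at h
  rw [mul_pow, ← mul_assoc]
  exact h

theorem hasSum_abs_selfPowExpTerm_fiber {t : ℝ} (ht : 0 ≤ t) (n : ℕ) :
    HasSum (fun j ↦ |selfPowExpTerm t (n, j)|) ((n : ℝ) ^ n / n ! * (t * exp t) ^ n) := by
  have h :=
    (NormedSpace.expSeries_div_hasSum_exp ((n : ℝ) * t)).mul_left ((n : ℝ) ^ n / n ! * t ^ n)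
  rw [← exp_eq_exp_ℝ, exp_nat_mul] at h
  rw [mul_pow, ← mul_assoc]
  refine h.congr_fun fun j ↦ ?_
  simp only [selfPowExpTerm, abs_mul, abs_div, abs_pow, abs_neg, abs_of_nonneg ht, Nat.abs_cast]

theorem summable_selfPowExpTerm {t : ℝ} (ht : 0 ≤ t) (hsmall : t * exp t < exp (-1)) :
    Summable (selfPowExpTerm t) := by
  have hratio : exp 1 * (t * exp t) < 1 := by
    calc exp 1 * (t * exp t) < exp 1 * exp (-1) := by gcongr
      _ = 1 := by rw [← exp_add]; simp
  refine summable_abs_iff.1 ((summable_prod_of_nonneg fun _ ↦ abs_nonneg _).2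
    ⟨fun n ↦ (hasSum_abs_selfPowExpTerm_fiber ht n).summable, ?_⟩)
  refine (summable_geometric_of_lt_one (by positivity) hratio).of_nonneg_of_le
    (fun n ↦ tsum_nonneg fun _ ↦ abs_nonneg _) fun n ↦ ?_
  rw [(hasSum_abs_selfPowExpTerm_fiber ht n).tsum_eq, mul_pow (exp 1), exp_one_pow]
  gcongr
  exact pow_div_factorial_le_exp _ n.cast_nonneg n

theorem sum_antidiagonal_selfPowExpTerm (t : ℝ) (m : ℕ) :
    ∑ kl ∈ antidiagonal m, selfPowExpTerm t kl = t ^ m := by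
  have hterm : ∀ kl ∈ antidiagonal m, selfPowExpTerm t kl
      = t ^ m / m ! * ((-1 : ℝ) ^ kl.2 * m.choose kl.1 * (kl.1 : ℝ) ^ m) := by
    rintro ⟨k, j⟩ hkj
    rw [HasAntidiagonal.mem_antidiagonal] at hkj
    subst hkj
    rw [selfPowExpTerm, Nat.cast_choose ℝ (Nat.le_add_right k j), Nat.add_sub_cancel_left]
    field_simp
    ring
  rw [sum_congr rfl hterm, ← mul_sum, sum_antidiagonal_neg_one_pow_mul_choose_mul_pow_self,
    div_mul_cancel₀ _ (by positivity)]

theorem hasSum_pow_self_div_factorial_mul_exp_neg {t : ℝ} (ht : 0 ≤ t)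
    (hsmall : t * exp t < exp (-1)) :
    HasSum (fun n : ℕ ↦ (n : ℝ) ^ n / n ! * (t * exp (-t)) ^ n) (1 - t)⁻¹ := by
  have ht1 : t < 1 := calc
    t ≤ t * exp t := le_mul_of_one_le_right ht (one_le_exp ht)
    _ < exp (-1) := hsmall
    _ < 1 := exp_lt_one_iff.2 (by norm_num)
  have hf := (summable_selfPowExpTerm ht hsmall).hasSum
  have hdiag : HasSum (fun m : ℕ ↦ t ^ m) (∑' p, selfPowExpTerm t p) := by
    simpa only [sum_antidiagonal_selfPowExpTerm] using hf.sum_antidiagonal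
  rw [(hasSum_geometric_of_lt_one ht ht1).unique hdiag]
  exact hf.prod_fiberwise (hasSum_selfPowExpTerm_fiber t)

theorem selfPowSeries_sum_mul_exp_neg {t : ℝ} (ht : t ∈ Set.Ico 0 1) :
    selfPowSeries.sum (t * exp (-t)) = (1 - t)⁻¹ := by
  have hG : AnalyticOnNhd ℝ (fun s ↦ selfPowSeries.sum (s * exp (-s))) (Set.Ico 0 1) := fun s hs ↦
    (analyticAt_selfPowSeries_sum (abs_mul_exp_neg_lt_exp_neg_one hs.1 hs.2.ne)).comp
      (f := fun s ↦ s * exp (-s)) (analyticAt_id.mul (analyticAt_rexp.comp analyticAt_id.neg))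
  have hR : AnalyticOnNhd ℝ (fun s : ℝ ↦ (1 - s)⁻¹) (Set.Ico 0 1) := fun s hs ↦
    (analyticAt_const.sub analyticAt_id).inv (sub_ne_zero.2 hs.2.ne')
  have hsmall : ∀ᶠ s in 𝓝[>] (0 : ℝ), selfPowSeries.sum (s * exp (-s)) = (1 - s)⁻¹ := by
    have hlim : ∀ᶠ s in 𝓝 (0 : ℝ), s * exp s < exp (-1) :=
      ((continuous_id.mul continuous_exp).tendsto' 0 0 (by simp)).eventually
        (gt_mem_nhds (exp_pos _))
    filter_upwards [nhdsWithin_le_nhds hlim, nhdsWithin_le_nhds (Iio_mem_nhds one_pos),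
      self_mem_nhdsWithin] with s hs hs1 hs0
    exact (hasSum_selfPowSeries (abs_mul_exp_neg_lt_exp_neg_one hs0.le (ne_of_lt hs1))).unique
      (hasSum_pow_self_div_factorial_mul_exp_neg hs0.le hs)
  exact hG.eqOn_of_preconnected_of_frequently_eq hR isPreconnected_Ico ⟨le_rfl, one_pos⟩
    (hsmall.frequently.filter_mono (nhdsWithin_mono _ fun s hs ↦ ne_of_gt hs)) ht

/-- The identity `∑_{n=1}^∞ n^{n} (t e^{-t})^n / n! = t/(1-t)` for `0 ≤ t < 1`. -/
theorem tree_function_identity' (t : ℝ) (ht0 : 0 ≤ t) (ht1 : t < 1) :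
    ∑' n : ℕ, ((n : ℝ) + 1) ^ (n + 1) * (t * Real.exp (-t)) ^ (n + 1)
        / (Nat.factorial (n + 1) : ℝ) = t / (1 - t) := by
  have h := hasSum_selfPowSeries (abs_mul_exp_neg_lt_exp_neg_one ht0 ht1.ne)
  rw [selfPowSeries_sum_mul_exp_neg ⟨ht0, ht1⟩, ← hasSum_nat_add_iff' 1] at h
  refine (h.congr_fun fun n ↦ ?_).tsum_eq.trans ?_
  · push_cast
    ring
  · have h1t : 1 - t ≠ 0 := sub_ne_zero.2 ht1.ne'
    field_simp
    simp
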